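/- In the three-category two-period static ordered response panel model, the U* sets satisfy: U*((0,0)) = U*((2,2)) = ℝ²; U*((1,1)) = {u : c₁ - c₂ - Δzβ ≤ Δu ≤ c₂ - c₁ - Δzβ}; U*((0,1)) = U*((1,2)) = {u : Δu ≥ -Δzβ}; U*((1,0)) = U*((2,1)) = {u : Δu ≤ -Δzβ}; U*((0,2)) = {u : Δu ≥ c₂ - c₁ - Δzβ}; U*((2,0)) = {u : Δu ≤ c₁ - c₂ - Δzβ}, where U*(y) = {u ∈ ℝ² : ∃ v ∈ ℝ, ∀ t ∈ {1,2}, c_{y_t} ≤ z_t β + v + u_t ≤ c_{y_t+1}} with c₀ = -∞, c₃ = +∞. -/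
import Mathlib


open scoped BigOperators

def dot {k : ℕ} (x y : Fin k → ℝ) : ℝ := ∑ i, x i * y i

/-- Condition on the latent index `x` for ordered category `y ∈ {0,1,2}`
with thresholds `c₁ < c₂` (with `c₀ = -∞`, `c₃ = +∞`). -/
def ocond (c1 c2 : ℝ) (y : Fin 3) (x : ℝ) : Prop :=
  if y = 0 then x ≤ c1 else if y = 1 then c1 ≤ x ∧ x ≤ c2 else c2 ≤ x

/-- `U*` set in the static two-period three-category ordered response panel. -/
def UstarOC {k : ℕ} (c1 c2 : ℝ) (β z1 z2 : Fin k → ℝ) (y1 y2 : Fin 3) :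
    Set (Fin 2 → ℝ) :=
  {u | ∃ v : ℝ, ocond c1 c2 y1 (dot z1 β + v + u 0) ∧ ocond c1 c2 y2 (dot z2 β + v + u 1)}

lemma ocond_zero (c1 c2 x : ℝ) : ocond c1 c2 0 x ↔ x ≤ c1 := by simp [ocond]
lemma ocond_one (c1 c2 x : ℝ) : ocond c1 c2 1 x ↔ c1 ≤ x ∧ x ≤ c2 := by simp [ocond]
lemma ocond_two (c1 c2 x : ℝ) : ocond c1 c2 2 x ↔ c2 ≤ x := by simp [ocond]

theorem ordered_choice_two_period_Ustar {k : ℕ} (c1 c2 : ℝ) (hc : c1 < c2)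
    (β z1 z2 : Fin k → ℝ) :
    UstarOC c1 c2 β z1 z2 0 0 = Set.univ ∧
    UstarOC c1 c2 β z1 z2 2 2 = Set.univ ∧
    UstarOC c1 c2 β z1 z2 1 1 =
      {u | c1 - c2 - (dot z2 β - dot z1 β) ≤ u 1 - u 0 ∧
           u 1 - u 0 ≤ c2 - c1 - (dot z2 β - dot z1 β)} ∧
    UstarOC c1 c2 β z1 z2 0 1 = {u | u 1 - u 0 ≥ -(dot z2 β - dot z1 β)} ∧
    UstarOC c1 c2 β z1 z2 1 2 = {u | u 1 - u 0 ≥ -(dot z2 β - dot z1 β)} ∧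
    UstarOC c1 c2 β z1 z2 1 0 = {u | u 1 - u 0 ≤ -(dot z2 β - dot z1 β)} ∧
    UstarOC c1 c2 β z1 z2 2 1 = {u | u 1 - u 0 ≤ -(dot z2 β - dot z1 β)} ∧
    UstarOC c1 c2 β z1 z2 0 2 = {u | u 1 - u 0 ≥ c2 - c1 - (dot z2 β - dot z1 β)} ∧
    UstarOC c1 c2 β z1 z2 2 0 = {u | u 1 - u 0 ≤ c1 - c2 - (dot z2 β - dot z1 β)} := by
  refine ⟨?_, ?_, ?_, ?_, ?_, ?_, ?_, ?_, ?_⟩ <;> ext u <;>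
    simp only [UstarOC, Set.mem_setOf_eq, ocond_zero, ocond_one, ocond_two,
      Set.mem_univ, iff_true, ge_iff_le]
  -- (0,0)
  · exact ⟨min (c1 - (dot z1 β + u 0)) (c1 - (dot z2 β + u 1)), by
      have := min_le_left (c1 - (dot z1 β + u 0)) (c1 - (dot z2 β + u 1)); linarith, by
      have := min_le_right (c1 - (dot z1 β + u 0)) (c1 - (dot z2 β + u 1)); linarith⟩
  -- (2,2)
  · exact ⟨max (c2 - (dot z1 β + u 0)) (c2 - (dot z2 β + u 1)), by
      have := le_max_left (c2 - (dot z1 β + u 0)) (c2 - (dot z2 β + u 1)); linarith, by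
      have := le_max_right (c2 - (dot z1 β + u 0)) (c2 - (dot z2 β + u 1)); linarith⟩
  -- (1,1)
  · constructor
    · rintro ⟨v, ⟨h1, h2⟩, h3, h4⟩; constructor <;> linarith
    · rintro ⟨h1, h2⟩
      exact ⟨max (c1 - (dot z1 β + u 0)) (c1 - (dot z2 β + u 1)), ⟨by
        have := le_max_left (c1 - (dot z1 β + u 0)) (c1 - (dot z2 β + u 1)); linarith, by
        have := max_le (by linarith : c1 - (dot z1 β + u 0) ≤ c2 - (dot z1 β + u 0))
          (by linarith : c1 - (dot z2 β + u 1) ≤ c2 - (dot z1 β + u 0)); linarith⟩, by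
        have := le_max_right (c1 - (dot z1 β + u 0)) (c1 - (dot z2 β + u 1)); linarith, by
        have := max_le (by linarith : c1 - (dot z1 β + u 0) ≤ c2 - (dot z2 β + u 1))
          (by linarith : c1 - (dot z2 β + u 1) ≤ c2 - (dot z2 β + u 1)); linarith⟩
  -- (0,1)
  · constructor
    · rintro ⟨v, h1, h2, h3⟩; linarith
    · intro h; exact ⟨c1 - (dot z2 β + u 1), by linarith, by linarith, by linarith⟩
  -- (1,2)
  · constructor
    · rintro ⟨v, ⟨h1, h2⟩, h3⟩; linarith
    · intro h; exact ⟨c2 - (dot z1 β + u 0), ⟨by linarith, by linarith⟩, by linarith⟩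
  -- (1,0)
  · constructor
    · rintro ⟨v, ⟨h1, h2⟩, h3⟩; linarith
    · intro h; exact ⟨c1 - (dot z1 β + u 0), ⟨by linarith, by linarith⟩, by linarith⟩
  -- (2,1)
  · constructor
    · rintro ⟨v, h1, h2, h3⟩; linarith
    · intro h; exact ⟨c2 - (dot z2 β + u 1), by linarith, by linarith, by linarith⟩
  -- (0,2)
  · constructor
    · rintro ⟨v, h1, h2⟩; linarith
    · intro h; exact ⟨c1 - (dot z1 β + u 0), by linarith, by linarith⟩
  -- (2,0)
  · constructor
    · rintro ⟨v, h1, h2⟩; linarith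
    · intro h; exact ⟨c2 - (dot z1 β + u 0), by linarith, by linarith⟩
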